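/- arXiv:1002.3902 — 2 statements merged into one kernel-verified Lean document; each statement's English description precedes it below -/
import Mathlib

section
/- Let 1 < p < ∞, let Y and X be real Banach spaces, and let T ∈ Π_p(Y,X) have dense range (the closure of T(Y) equals X). Then T belongs to the closure of the finite rank operators Y*⊗X in the topology τ_p of π_p-compact convergence if and only if T belongs to the τ_p-closure of the set {T∘R : R ∈ Y*⊗Y a finite rank operator on Y}. -/
/- Common definitions: absolutely p-summing operators, the π_p norm, quasi-p-nuclear
operators, finite rank operators, the auxiliary spaces Y_K (span of a compact absolutely
convex set K with the gauge norm, realized here through its dual ball), the seminorms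
U ↦ π_p(U ∘ Φ_K) generating the topology τ_p of π_p-compact convergence (this family of
seminorms is directed, so membership in a τ_p-closure can be tested against one K at a
time), representations of elements of the completed tensor product X*⊗̂_q Y, and
reflexivity of a normed space. -/

open NormedSpace
open scoped ENNReal

noncomputable section

section Defs

variable {Y X : Type*} [NormedAddCommGroup Y] [NormedSpace ℝ Y]
  [NormedAddCommGroup X] [NormedSpace ℝ X]

/-- The weak `ℓ^p`-norm of a finite family `y` in `Y`:
`sup { (∑ |⟨y i, f⟩|^p)^(1/p) : f ∈ Y*, ‖f‖ ≤ 1 }`. -/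
def weakLpNorm (p : ℝ) {n : ℕ} (y : Fin n → Y) : ℝ :=
  sSup {r | ∃ f : StrongDual ℝ Y, ‖f‖ ≤ 1 ∧ r = (∑ i, |f (y i)| ^ p) ^ (1 / p)}

/-- `T` is absolutely `p`-summing with constant `C`. -/
def PSummingLE (p : ℝ) (T : Y →L[ℝ] X) (C : ℝ) : Prop :=
  ∀ (n : ℕ) (y : Fin n → Y), (∑ i, ‖T (y i)‖ ^ p) ^ (1 / p) ≤ C * weakLpNorm p y

/-- `T` is absolutely `p`-summing. -/
def IsPSumming (p : ℝ) (T : Y →L[ℝ] X) : Prop :=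
  ∃ C : ℝ, 0 ≤ C ∧ PSummingLE p T C

/-- The `p`-summing norm `π_p(T)` (the least admissible constant). -/
def piNorm (p : ℝ) (T : Y →L[ℝ] X) : ℝ :=
  sInf {C | 0 ≤ C ∧ PSummingLE p T C}

/-- `T` is quasi-`p`-nuclear: `‖T y‖^p ≤ ∑ |⟨y, y'_n⟩|^p` with `∑ ‖y'_n‖^p < ∞`. -/
def IsQuasiPNuclear (p : ℝ) (T : Y →L[ℝ] X) : Prop :=
  ∃ g : ℕ → StrongDual ℝ Y, Summable (fun n => ‖g n‖ ^ p) ∧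
    ∀ y : Y, ‖T y‖ ^ p ≤ ∑' n, |g n y| ^ p

/-- `T` has finite rank; `{A | IsFiniteRank A}` plays the role of `Y*⊗X`. -/
def IsFiniteRank (T : Y →L[ℝ] X) : Prop :=
  FiniteDimensional ℝ (LinearMap.range (T : Y →ₗ[ℝ] X))

/-- `K` is a compact absolutely convex (convex and balanced) subset. -/
def IsCompactAbsConvex (K : Set Y) : Prop :=
  IsCompact K ∧ Convex ℝ K ∧ Balanced ℝ K

/-- The unit ball of the dual of `Y_K` (the span of `K` with the gauge norm of `K`):
linear functionals on the span of `K` bounded by `1` on `K`. -/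
def KDualBall (K : Set Y) : Set (Submodule.span ℝ K →ₗ[ℝ] ℝ) :=
  {w | ∀ x : Submodule.span ℝ K, (x : Y) ∈ K → |w x| ≤ 1}

/-- The weak `ℓ^p`-norm of a finite family of elements of `Y_K`. -/
def weakLpNormK (p : ℝ) (K : Set Y) {n : ℕ} (a : Fin n → Submodule.span ℝ K) : ℝ :=
  sSup {r | ∃ w ∈ KDualBall K, r = (∑ i, |w (a i)| ^ p) ^ (1 / p)}

/-- `U ∘ Φ_K : Y_K → X` is absolutely `p`-summing with constant `C`. -/
def PSummingOnKLE (p : ℝ) (K : Set Y) (U : Y →L[ℝ] X) (C : ℝ) : Prop :=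
  ∀ (n : ℕ) (a : Fin n → Submodule.span ℝ K),
    (∑ i, ‖U (a i : Y)‖ ^ p) ^ (1 / p) ≤ C * weakLpNormK p K a

/-- `piNormOnK p K U = π_p(U ∘ Φ_K)`, where `Φ_K : Y_K → Y` is the canonical inclusion.
These are the seminorms generating the topology `τ_p` of `π_p`-compact convergence. -/
def piNormOnK (p : ℝ) (K : Set Y) (U : Y →L[ℝ] X) : ℝ :=
  sInf {C | 0 ≤ C ∧ PSummingOnKLE p K U C}

/-- `T` belongs to the closure of `S` in the topology `τ_p` of `π_p`-compact convergence.
(The family of seminorms `π_p(· ∘ Φ_K)` is directed in `K`, so it suffices to test one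
compact absolutely convex set `K` at a time.) -/
def MemTauPClosure (p : ℝ) (S : Set (Y →L[ℝ] X)) (T : Y →L[ℝ] X) : Prop :=
  ∀ K : Set Y, IsCompactAbsConvex K → ∀ ε : ℝ, 0 < ε →
    ∃ A ∈ S, piNormOnK p K (T - A) < ε

/-- `T` belongs to the closure of the finite rank operators in the `π_p`-norm
(within `Π_p(Y,X)`). -/
def MemPiNormClosureFR (p : ℝ) (T : Y →L[ℝ] X) : Prop :=
  IsPSumming p T ∧ ∀ ε : ℝ, 0 < ε →
    ∃ A : Y →L[ℝ] X, IsFiniteRank A ∧ piNorm p (T - A) < ε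

/-- The scalar sequence `c` lies in the ball of radius `D` of weak-`ℓ^r`, `r ∈ [1,∞]`. -/
def lqBound (r : ℝ≥0∞) (c : ℕ → ℝ) (D : ℝ) : Prop :=
  (r = ∞ ∧ ∀ n, |c n| ≤ D) ∨
  (r ≠ ∞ ∧ ∀ s : Finset ℕ, ∑ n ∈ s, |c n| ^ r.toReal ≤ D)

/-- A normed space is reflexive if the canonical embedding into its double dual is onto. -/
def IsReflexiveSpace (X : Type*) [NormedAddCommGroup X] [NormedSpace ℝ X] : Prop :=
  Function.Surjective (inclusionInDoubleDual ℝ X)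

/-- `X` has the (Grothendieck) approximation property. -/
def HasAP (X : Type*) [NormedAddCommGroup X] [NormedSpace ℝ X] : Prop :=
  ∀ K : Set X, IsCompact K → ∀ ε : ℝ, 0 < ε →
    ∃ R : X →L[ℝ] X, IsFiniteRank R ∧ ∀ x ∈ K, ‖R x - x‖ ≤ ε

/-- `H` has a Schauder basis. -/
def HasSchauderBasis (H : Type*) [NormedAddCommGroup H] [NormedSpace ℝ H] : Prop :=
  ∃ e : ℕ → H, ∀ x : H, ∃! c : ℕ → ℝ,
    Filter.Tendsto (fun N => ∑ n ∈ Finset.range N, c n • e n) Filter.atTop (nhds x)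

end Defs

/-- A representation `∑ x'_n ⊗ y_n` of an element of the completed tensor product
`X*⊗̂_q Y`: here `∑ ‖x'_n‖^q < ∞` and `(y_n)` is weakly `q'`-summable, where `q'` is the
conjugate exponent of `q`. -/
structure TensorRep (q : ℝ) (q' : ℝ≥0∞) (X Y : Type*) [NormedAddCommGroup X]
    [NormedSpace ℝ X] [NormedAddCommGroup Y] [NormedSpace ℝ Y] where
  a : ℕ → StrongDual ℝ X
  b : ℕ → Y
  summable_a : Summable fun n => ‖a n‖ ^ q
  weak_b : ∃ D : ℝ, ∀ g : StrongDual ℝ Y, ‖g‖ ≤ 1 → lqBound q' (fun n => g (b n)) D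

namespace TensorRep

variable {q : ℝ} {q' : ℝ≥0∞} {X Y : Type*} [NormedAddCommGroup X] [NormedSpace ℝ X]
  [NormedAddCommGroup Y] [NormedSpace ℝ Y]

/-- The value at `x` of the operator `X → Y` canonically induced by the tensor element
(the canonical map `j : X*⊗̂_q Y → N_q(X,Y) ⊆ L(X,Y)`). -/
def app (z : TensorRep q q' X Y) (x : X) : Y :=
  ∑' n, z.a n x • z.b n

/-- `trace U∘z = ∑ ⟨U y_n, x'_n⟩` for `U : Y → X`. -/
def traceWith (z : TensorRep q q' X Y) (U : Y →L[ℝ] X) : ℝ :=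
  ∑' n, z.a n (U (z.b n))

/-- `trace U∘z = ∑ ⟨U y_n, x'_n⟩` for `U : Y → X**`. -/
def traceBidual (z : TensorRep q q' X Y) (U : Y →L[ℝ] StrongDual ℝ (StrongDual ℝ X)) : ℝ :=
  ∑' n, U (z.b n) (z.a n)

/-- `z` represents the zero element of `X*⊗̂_q Y`.  By the Persson–Pietsch–Saphar duality
`(X*⊗̂_q Y)* = Π_{q'}(Y, X**)` (with `r = q'` the conjugate exponent of `q`), an element is
zero iff every absolutely `q'`-summing operator `U : Y → X**` gives `trace U∘z = 0`. -/
def IsZeroElem (r : ℝ) (z : TensorRep q q' X Y) : Prop :=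
  ∀ U : Y →L[ℝ] StrongDual ℝ (StrongDual ℝ X), IsPSumming (X := StrongDual ℝ (StrongDual ℝ X)) r U → z.traceBidual U = 0

end TensorRep

/-! The inclusion `{T ∘ R : R ∈ Y*⊗Y} ⊆ Y*⊗X` gives one direction. Conversely, if
`A = ∑ fᵢ ⊗ xᵢ` is `τ_p`-close to `T` on `Y_K`, choose `yᵢ` with `T yᵢ` close to `xᵢ` (dense range)
and put `R = ∑ fᵢ ⊗ yᵢ`. Then `A - T ∘ R = ∑ fᵢ ⊗ (xᵢ - T yᵢ)`, and on `Y_K` the `p`-summing norm of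
`f ⊗ x` is at most `sup_K |f| · ‖x‖`, which is finite since `K` is compact. -/

lemma Real.rpow_one_div_sum_mul_rpow {ι : Type*} (s : Finset ι) {p c : ℝ} (hp : p ≠ 0)
    (hc : 0 ≤ c) {f : ι → ℝ} (hf : ∀ i ∈ s, 0 ≤ f i) :
    (∑ i ∈ s, (c * f i) ^ p) ^ (1 / p) = c * (∑ i ∈ s, f i ^ p) ^ (1 / p) := by
  have hsum : 0 ≤ ∑ i ∈ s, f i ^ p := Finset.sum_nonneg fun i hi => Real.rpow_nonneg (hf i hi) _
  rw [Finset.sum_congr rfl fun i hi => Real.mul_rpow hc (hf i hi), ← Finset.mul_sum,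
    Real.mul_rpow (Real.rpow_nonneg hc _) hsum, ← Real.rpow_mul hc, mul_one_div_cancel hp,
    Real.rpow_one]

section TauP

variable {Y X : Type*} [NormedAddCommGroup Y] [NormedSpace ℝ Y]
  [NormedAddCommGroup X] [NormedSpace ℝ X] {p : ℝ} {K : Set Y}

lemma exists_forall_mem_KDualBall_abs_le (a : Submodule.span ℝ K) :
    ∃ B : ℝ, ∀ w ∈ KDualBall K, |w a| ≤ B := by
  obtain ⟨x, hx⟩ := a
  induction hx using Submodule.span_induction with
  | mem x hx => exact ⟨1, fun w hw => hw _ hx⟩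
  | zero => exact ⟨0, fun w _ => by simp [show (⟨0, _⟩ : Submodule.span ℝ K) = 0 from rfl]⟩
  | add x y hx hy ihx ihy =>
    obtain ⟨B₁, h₁⟩ := ihx
    obtain ⟨B₂, h₂⟩ := ihy
    refine ⟨B₁ + B₂, fun w hw => ?_⟩
    change |w (⟨x, hx⟩ + ⟨y, hy⟩)| ≤ B₁ + B₂
    rw [map_add]
    exact (abs_add_le _ _).trans (add_le_add (h₁ w hw) (h₂ w hw))
  | smul c x hx ih =>
    obtain ⟨B, h⟩ := ih
    refine ⟨|c| * B, fun w hw => ?_⟩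
    change |w (c • ⟨x, hx⟩)| ≤ |c| * B
    rw [map_smul, smul_eq_mul, abs_mul]
    exact mul_le_mul_of_nonneg_left (h w hw) (abs_nonneg c)

lemma le_weakLpNormK (hp : 0 < p) {n : ℕ} (a : Fin n → Submodule.span ℝ K)
    {w : Submodule.span ℝ K →ₗ[ℝ] ℝ} (hw : w ∈ KDualBall K) :
    (∑ i, |w (a i)| ^ p) ^ (1 / p) ≤ weakLpNormK p K a := by
  refine le_csSup ?_ ⟨w, hw, rfl⟩
  choose B hB using fun i => exists_forall_mem_KDualBall_abs_le (a i)
  refine ⟨(∑ i, B i ^ p) ^ (1 / p), ?_⟩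
  rintro r ⟨v, hv, rfl⟩
  gcongr with i
  exact hB i v hv

lemma rpow_one_div_sum_abs_rpow_le_mul_weakLpNormK (hp : 0 < p) {n : ℕ}
    (a : Fin n → Submodule.span ℝ K) (g : StrongDual ℝ Y) {M : ℝ} (hM : 0 < M)
    (hg : ∀ y ∈ K, |g y| ≤ M) :
    (∑ i, |g (a i)| ^ p) ^ (1 / p) ≤ M * weakLpNormK p K a := by
  set w : Submodule.span ℝ K →ₗ[ℝ] ℝ :=
    M⁻¹ • ((g : Y →ₗ[ℝ] ℝ).comp (Submodule.span ℝ K).subtype)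
  have hw_apply (z : Submodule.span ℝ K) : |g z| = M * |w z| := by
    simp [w, abs_mul, abs_of_pos hM, hM.ne']
  have hw : w ∈ KDualBall K := fun z hz =>
    le_of_mul_le_mul_left (by linarith [hg z hz, hw_apply z]) hM
  simp_rw [hw_apply]
  rw [Real.rpow_one_div_sum_mul_rpow _ hp.ne' hM.le fun i _ => abs_nonneg _]
  exact mul_le_mul_of_nonneg_left (le_weakLpNormK hp a hw) hM.le

lemma psummingOnKLE_smulRight (hp : 0 < p) {f : StrongDual ℝ Y} {M : ℝ} (hM : 0 < M)
    (hf : ∀ y ∈ K, |f y| ≤ M) (x : X) :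
    PSummingOnKLE p K (f.smulRight x) (M * ‖x‖) := by
  intro n a
  have hnorm (i : Fin n) : ‖f.smulRight x (a i)‖ = ‖x‖ * |f (a i)| := by
    rw [ContinuousLinearMap.smulRight_apply, norm_smul, Real.norm_eq_abs, mul_comm]
  simp_rw [hnorm]
  rw [Real.rpow_one_div_sum_mul_rpow _ hp.ne' (norm_nonneg x) fun i _ => abs_nonneg _,
    mul_comm M, mul_assoc]
  exact mul_le_mul_of_nonneg_left
    (rpow_one_div_sum_abs_rpow_le_mul_weakLpNormK hp a f hM hf) (norm_nonneg x)

lemma psummingOnKLE_zero (hp : 0 < p) : PSummingOnKLE p K (0 : Y →L[ℝ] X) 0 := by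
  intro n a
  simp [Real.zero_rpow hp.ne', Real.zero_rpow (inv_ne_zero hp.ne')]

lemma PSummingOnKLE.add (hp : 1 ≤ p) {U V : Y →L[ℝ] X} {C D : ℝ}
    (hU : PSummingOnKLE p K U C) (hV : PSummingOnKLE p K V D) :
    PSummingOnKLE p K (U + V) (C + D) := by
  intro n a
  calc (∑ i, ‖(U + V) (a i)‖ ^ p) ^ (1 / p)
      ≤ (∑ i, (‖U (a i)‖ + ‖V (a i)‖) ^ p) ^ (1 / p) := by
        gcongr with i
        exact norm_add_le _ _
    _ ≤ (∑ i, ‖U (a i)‖ ^ p) ^ (1 / p) + (∑ i, ‖V (a i)‖ ^ p) ^ (1 / p) :=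
        Real.Lp_add_le_of_nonneg _ hp (fun i _ => norm_nonneg _) fun i _ => norm_nonneg _
    _ ≤ C * weakLpNormK p K a + D * weakLpNormK p K a := add_le_add (hU n a) (hV n a)
    _ = (C + D) * weakLpNormK p K a := (add_mul C D _).symm

lemma PSummingOnKLE.neg {U : Y →L[ℝ] X} {C : ℝ} (h : PSummingOnKLE p K U C) :
    PSummingOnKLE p K (-U) C := fun n a => by simpa using h n a

lemma psummingOnKLE_sum (hp : 1 ≤ p) {ι : Type*} (s : Finset ι) {U : ι → Y →L[ℝ] X}
    {C : ι → ℝ} (h : ∀ i ∈ s, PSummingOnKLE p K (U i) (C i)) :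
    PSummingOnKLE p K (∑ i ∈ s, U i) (∑ i ∈ s, C i) := by
  induction s using Finset.cons_induction with
  | empty => simpa using psummingOnKLE_zero (by linarith)
  | cons i s hi ih =>
    rw [Finset.sum_cons, Finset.sum_cons]
    exact (h i (s.mem_cons_self i)).add hp (ih fun j hj => h j (Finset.mem_cons_of_mem hj))

lemma exists_psummingOnKLE_sum_smulRight (hp : 1 ≤ p) (hK : IsCompact K) {ι : Type*}
    [Fintype ι] (f : ι → StrongDual ℝ Y) :
    ∃ M : ι → ℝ, (∀ i, 0 ≤ M i) ∧ ∀ x : ι → X,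
      PSummingOnKLE p K (∑ i, (f i).smulRight (x i)) (∑ i, M i * ‖x i‖) := by
  have hbound (i : ι) : ∃ M > 0, ∀ y ∈ K, |f i y| ≤ M := by
    obtain ⟨C, hC⟩ := hK.exists_bound_of_continuousOn (f i).continuous.continuousOn
    exact ⟨max C 1, by positivity, fun y hy => (hC y hy).trans (le_max_left C 1)⟩
  choose M hM₀ hM using hbound
  exact ⟨M, fun i => (hM₀ i).le, fun x => psummingOnKLE_sum hp _ fun i _ =>
    psummingOnKLE_smulRight (by linarith) (hM₀ i) (hM i) (x i)⟩

lemma piNormOnK_nonneg (U : Y →L[ℝ] X) : 0 ≤ piNormOnK p K U :=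
  Real.sInf_nonneg fun _ hC => hC.1

lemma piNormOnK_le {U : Y →L[ℝ] X} {C : ℝ} (hC : 0 ≤ C) (h : PSummingOnKLE p K U C) :
    piNormOnK p K U ≤ C :=
  csInf_le ⟨0, fun _ hc => hc.1⟩ ⟨hC, h⟩

/-- Only `V` has to be `p`-summing on `Y_K`: if `U` is not, neither is `U + V`, and both
`piNormOnK p K U` and `piNormOnK p K (U + V)` take the junk value `sInf ∅ = 0`. -/
lemma piNormOnK_add_le (hp : 1 ≤ p) {U V : Y →L[ℝ] X}
    (hV : ∃ D, 0 ≤ D ∧ PSummingOnKLE p K V D) :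
    piNormOnK p K (U + V) ≤ piNormOnK p K U + piNormOnK p K V := by
  by_cases hU : ∃ C, 0 ≤ C ∧ PSummingOnKLE p K U C
  · have hsub : ∀ D ∈ {D | 0 ≤ D ∧ PSummingOnKLE p K V D},
        piNormOnK p K (U + V) - D ≤ piNormOnK p K U := fun D hD =>
      le_csInf hU fun C hC => by
        linarith [piNormOnK_le (add_nonneg hC.1 hD.1) (hC.2.add hp hD.2)]
    have hdiff : piNormOnK p K (U + V) - piNormOnK p K U ≤ piNormOnK p K V :=
      le_csInf hV fun D hD => by linarith [hsub D hD]
    linarith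
  · have hempty : {C | 0 ≤ C ∧ PSummingOnKLE p K (U + V) C} = ∅ := by
      refine Set.eq_empty_of_forall_notMem fun C hC => hU ?_
      obtain ⟨D, hD, hVD⟩ := hV
      exact ⟨C + D, add_nonneg hC.1 hD, by simpa using hC.2.add hp hVD.neg⟩
    rw [piNormOnK, hempty, Real.sInf_empty]
    exact add_nonneg (piNormOnK_nonneg U) (piNormOnK_nonneg V)

lemma MemTauPClosure.mono {S S' : Set (Y →L[ℝ] X)} (hS : S ⊆ S') {T : Y →L[ℝ] X}
    (h : MemTauPClosure p S T) : MemTauPClosure p S' T := fun K hK ε hε =>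
  let ⟨A, hA, hTA⟩ := h K hK ε hε
  ⟨A, hS hA, hTA⟩

end TauP

section FiniteRank

variable {Y X Z : Type*} [NormedAddCommGroup Y] [NormedSpace ℝ Y]
  [NormedAddCommGroup X] [NormedSpace ℝ X] [NormedAddCommGroup Z] [NormedSpace ℝ Z]

lemma IsFiniteRank.exists_eq_sum_smulRight {A : Y →L[ℝ] X} (hA : IsFiniteRank A) :
    ∃ (m : ℕ) (f : Fin m → StrongDual ℝ Y) (x : Fin m → X),
      A = ∑ i, (f i).smulRight (x i) := by
  have : FiniteDimensional ℝ (LinearMap.range (A : Y →ₗ[ℝ] X)) := hA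
  let b := Module.finBasis ℝ (LinearMap.range (A : Y →ₗ[ℝ] X))
  let A' := A.codRestrict (LinearMap.range (A : Y →ₗ[ℝ] X)) (LinearMap.mem_range_self _)
  refine ⟨_, fun i => (LinearMap.toContinuousLinearMap (b.coord i)).comp A', fun i => b i, ?_⟩
  ext y
  change (A' y : X) = _
  simp only [sum_apply, ContinuousLinearMap.smulRight_apply,
    ContinuousLinearMap.comp_apply, LinearMap.coe_toContinuousLinearMap',
    Module.Basis.coord_apply, ← Submodule.coe_smul, ← Submodule.coe_sum, b.sum_repr]

lemma isFiniteRank_sum_smulRight {ι : Type*} [Fintype ι] (f : ι → StrongDual ℝ Y)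
    (x : ι → X) : IsFiniteRank (∑ i, (f i).smulRight (x i)) := by
  have hle : LinearMap.range ((∑ i, (f i).smulRight (x i) : Y →L[ℝ] X) : Y →ₗ[ℝ] X)
      ≤ Submodule.span ℝ (Set.range x) := by
    rintro _ ⟨y, rfl⟩
    simpa using Submodule.sum_mem _ fun i _ =>
      Submodule.smul_mem _ (f i y) (Submodule.subset_span (Set.mem_range_self i))
  have : FiniteDimensional ℝ (Submodule.span ℝ (Set.range x)) :=
    FiniteDimensional.span_of_finite ℝ (Set.finite_range x)
  exact Submodule.finiteDimensional_of_le hle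

lemma IsFiniteRank.comp (T : X →L[ℝ] Z) {R : Y →L[ℝ] X} (hR : IsFiniteRank R) :
    IsFiniteRank (T.comp R) := by
  have : FiniteDimensional ℝ (LinearMap.range (R : Y →ₗ[ℝ] X)) := hR
  unfold IsFiniteRank
  rw [ContinuousLinearMap.toLinearMap_comp, LinearMap.range_comp]
  infer_instance

end FiniteRank

lemma memTauPClosure_comp_finiteRank_of_memTauPClosure_finiteRank {p : ℝ} (hp : 1 ≤ p)
    {Y X : Type*} [NormedAddCommGroup Y] [NormedSpace ℝ Y] [NormedAddCommGroup X]
    [NormedSpace ℝ X] {T : Y →L[ℝ] X} (hdense : DenseRange T)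
    (h : MemTauPClosure p {A : Y →L[ℝ] X | IsFiniteRank A} T) :
    MemTauPClosure p {A : Y →L[ℝ] X | ∃ R : Y →L[ℝ] Y, IsFiniteRank R ∧ A = T.comp R} T := by
  intro K hK ε hε
  obtain ⟨A, hA, hTA⟩ := h K hK (ε / 2) (half_pos hε)
  obtain ⟨m, f, x, rfl⟩ := hA.exists_eq_sum_smulRight
  obtain ⟨M, hM₀, hM⟩ := exists_psummingOnKLE_sum_smulRight (X := X) hp hK.1 f
  have hopen : IsOpen {v : Fin m → X | ∑ i, M i * ‖x i - v i‖ < ε / 2} :=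
    isOpen_lt (by fun_prop) continuous_const
  obtain ⟨y, hy⟩ := (DenseRange.piMap fun _ => hdense).exists_mem_open hopen
    ⟨x, by simpa using half_pos hε⟩
  refine ⟨T.comp (∑ i, (f i).smulRight (y i)), ⟨_, isFiniteRank_sum_smulRight f y, rfl⟩, ?_⟩
  have hdecomp : T - T.comp (∑ i, (f i).smulRight (y i))
      = (T - ∑ i, (f i).smulRight (x i)) + ∑ i, (f i).smulRight (x i - T (y i)) := by
    ext z
    simp [smul_sub, Finset.sum_sub_distrib]
  have hD : 0 ≤ ∑ i, M i * ‖x i - T (y i)‖ :=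
    Finset.sum_nonneg fun i _ => mul_nonneg (hM₀ i) (norm_nonneg _)
  calc piNormOnK p K (T - T.comp (∑ i, (f i).smulRight (y i)))
      ≤ piNormOnK p K (T - ∑ i, (f i).smulRight (x i))
        + piNormOnK p K (∑ i, (f i).smulRight (x i - T (y i))) :=
        hdecomp ▸ piNormOnK_add_le hp ⟨_, hD, hM (fun i => x i - T (y i))⟩
    _ < ε / 2 + ε / 2 := add_lt_add_of_lt_of_le hTA ((piNormOnK_le hD (hM _)).trans hy.le)
    _ = ε := add_halves ε

theorem statement4_general (p : ℝ) (hp : 1 < p)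
    (Y : Type*) [NormedAddCommGroup Y] [NormedSpace ℝ Y]
    (X : Type*) [NormedAddCommGroup X] [NormedSpace ℝ X]
    (T : Y →L[ℝ] X) (hdense : DenseRange T) :
    MemTauPClosure p {A : Y →L[ℝ] X | IsFiniteRank A} T
      ↔ MemTauPClosure p
          {A : Y →L[ℝ] X | ∃ R : Y →L[ℝ] Y, IsFiniteRank R ∧ A = T.comp R} T :=
  ⟨memTauPClosure_comp_finiteRank_of_memTauPClosure_finiteRank hp.le hdense,
    MemTauPClosure.mono (by rintro _ ⟨R, hR, rfl⟩; exact hR.comp T)⟩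

/-- Proposition 1.7.  For `T ∈ Π_p(Y,X)` with dense range, `T` is in the
`τ_p`-closure of the finite rank operators `Y*⊗X` iff `T` is in the `τ_p`-closure of
`{T∘R : R ∈ Y*⊗Y}`. -/
theorem statement4 (p : ℝ) (hp : 1 < p)
    (Y : Type*) [NormedAddCommGroup Y] [NormedSpace ℝ Y] [CompleteSpace Y]
    (X : Type*) [NormedAddCommGroup X] [NormedSpace ℝ X] [CompleteSpace X]
    (T : Y →L[ℝ] X) (hT : IsPSumming p T) (hdense : DenseRange T) :
    MemTauPClosure p {A : Y →L[ℝ] X | IsFiniteRank A} T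
      ↔ MemTauPClosure p
          {A : Y →L[ℝ] X | ∃ R : Y →L[ℝ] Y, IsFiniteRank R ∧ A = T.comp R} T :=
  statement4_general p hp Y X T hdense
end
end

section
/- If a real Banach space X has the approximation property of Grothendieck, then for every p with 1 < p < ∞ and every Banach space Y the canonical map Y*⊗̂_p X → N_p(Y,X) is injective. -/
/- Common definitions: absolutely p-summing operators, the π_p norm, quasi-p-nuclear
operators, finite rank operators, the auxiliary spaces Y_K (span of a compact absolutely
convex set K with the gauge norm, realized here through its dual ball), the seminorms
U ↦ π_p(U ∘ Φ_K) generating the topology τ_p of π_p-compact convergence (this family of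
seminorms is directed, so membership in a τ_p-closure can be tested against one K at a
time), representations of elements of the completed tensor product X*⊗̂_q Y, and
reflexivity of a normed space. -/

open NormedSpace
open scoped ENNReal

noncomputable section

universe u

/-! Write `z = ∑ a_n ⊗ b_n` with `∑ ‖a_n‖^p < ∞` and `(b_n)` weakly `ℓ^q`-bounded, and let
`U : X → Y**` be `q`-summing with constant `C`. Choose weights `μ_n ↑ ∞` with
`∑ (μ_n ‖a_n‖)^p < ∞`; the image `S` of the unit ball of `ℓ^p` under `t ↦ ∑ t_n μ_n⁻¹ b_n` is
then relatively compact, so the approximation property gives a finite rank `R` with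
`‖R x - x‖ ≤ ε` on `S`. Since `z` induces the zero operator, `∑ φ(b_n) a_n = 0` in `Y*` for every
`φ ∈ X*`, and writing `R` as a sum of rank one operators gives `∑ U(R b_n)(a_n) = 0`. By duality
the sequence `μ_n⁻¹ (b_n - R b_n)` has weak `ℓ^q`-norm at most `ε`, so `q`-summability of `U` and
Hölder's inequality give `|∑ U(b_n)(a_n)| = |∑ U(b_n - R b_n)(a_n)| ≤ C ε (∑ (μ_n ‖a_n‖)^p)^{1/p}`.
-/

open Filter Finset Topology

lemma sum_abs_const_mul_rpow_rpow_one_div {ι : Type*} (s : Finset ι) (v : ι → ℝ) (c : ℝ)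
    {q : ℝ} (hq : 0 < q) :
    (∑ n ∈ s, |c * v n| ^ q) ^ (1 / q) = |c| * (∑ n ∈ s, |v n| ^ q) ^ (1 / q) := by
  simp_rw [abs_mul, Real.mul_rpow (abs_nonneg c) (abs_nonneg _), ← Finset.mul_sum]
  rw [Real.mul_rpow (Real.rpow_nonneg (abs_nonneg c) q)
    (sum_nonneg fun n _ => Real.rpow_nonneg (abs_nonneg _) q), one_div,
    Real.rpow_rpow_inv (abs_nonneg c) hq.ne']

lemma summable_and_abs_tsum_le_of_holder {p q : ℝ} (hpq : p.HolderConjugate q)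
    {h u v : ℕ → ℝ} {B : ℝ} (hu0 : ∀ n, 0 ≤ u n) (hv0 : ∀ n, 0 ≤ v n)
    (hu : Summable fun n => u n ^ p) (hv : ∀ s : Finset ℕ, (∑ n ∈ s, v n ^ q) ^ (1 / q) ≤ B)
    (huv : ∀ n, |h n| ≤ u n * v n) :
    Summable h ∧ |∑' n, h n| ≤ (∑' n, u n ^ p) ^ (1 / p) * B := by
  have hpartial (s : Finset ℕ) : ∑ n ∈ s, |h n| ≤ (∑' n, u n ^ p) ^ (1 / p) * B :=
    calc ∑ n ∈ s, |h n| ≤ ∑ n ∈ s, u n * v n := sum_le_sum fun n _ => huv n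
      _ ≤ (∑ n ∈ s, u n ^ p) ^ (1 / p) * (∑ n ∈ s, v n ^ q) ^ (1 / q) :=
        Real.inner_le_Lp_mul_Lq_of_nonneg s hpq (fun n _ => hu0 n) (fun n _ => hv0 n)
      _ ≤ (∑' n, u n ^ p) ^ (1 / p) * B := by
        have hu_le : ∑ n ∈ s, u n ^ p ≤ ∑' n, u n ^ p :=
          hu.sum_le_tsum s fun n _ => Real.rpow_nonneg (hu0 n) p
        have hs0 : 0 ≤ ∑ n ∈ s, u n ^ p := sum_nonneg fun n _ => Real.rpow_nonneg (hu0 n) p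
        exact mul_le_mul (Real.rpow_le_rpow hs0 hu_le hpq.one_div_nonneg) (hv s)
          (Real.rpow_nonneg (sum_nonneg fun n _ => Real.rpow_nonneg (hv0 n) q) _)
          (Real.rpow_nonneg (tsum_nonneg fun n => Real.rpow_nonneg (hu0 n) p) _)
  have habs : Summable fun n => |h n| := summable_of_sum_le (fun n => abs_nonneg _) hpartial
  refine ⟨habs.of_abs, ?_⟩
  calc |∑' n, h n| ≤ ∑' n, |h n| := by
        simpa only [Real.norm_eq_abs] using norm_tsum_le_tsum_norm (f := h) habs
    _ ≤ _ := habs.tsum_le_of_sum_le hpartial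

/-- The extremal sequence is `t n = sign (v n) |v n| ^ (q - 1) / M ^ (1 / p)` with
`M = ∑ n ∈ s, |v n| ^ q`. -/
lemma rpow_sum_abs_rpow_le_of_forall_abs_sum_mul_le {ι : Type*} {p q : ℝ}
    (hpq : p.HolderConjugate q) (s : Finset ι) (v : ι → ℝ) {ε : ℝ}
    (h : ∀ t : ι → ℝ, ∑ n ∈ s, |t n| ^ p ≤ 1 → |∑ n ∈ s, t n * v n| ≤ ε) :
    (∑ n ∈ s, |v n| ^ q) ^ (1 / q) ≤ ε := by
  have hε : 0 ≤ ε := (abs_nonneg _).trans (h 0 (by simp [Real.zero_rpow hpq.ne_zero]))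
  set M := ∑ n ∈ s, |v n| ^ q
  have hM : 0 ≤ M := sum_nonneg fun n _ => by positivity
  rcases hM.eq_or_lt with hM0 | hMpos
  · rwa [← hM0, Real.zero_rpow (one_div_ne_zero hpq.symm.ne_zero)]
  have hMp : 0 < M ^ (1 / p) := Real.rpow_pos_of_pos hMpos _
  let t : ι → ℝ := fun n => SignType.sign (v n) * |v n| ^ (q - 1) / M ^ (1 / p)
  have ht : ∑ n ∈ s, |t n| ^ p = 1 := by
    have (n : ι) : |t n| ^ p = |v n| ^ q / M := by
      have habs : |t n| = |v n| ^ (q - 1) / M ^ (1 / p) := by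
        rcases lt_trichotomy (v n) 0 with hn | hn | hn
        · simp [t, hn, abs_div, abs_of_pos (Real.rpow_pos_of_pos hMpos _),
            abs_of_nonneg (Real.rpow_nonneg (abs_nonneg (v n)) (q - 1))]
        · simp [t, hn, Real.zero_rpow hpq.symm.sub_one_ne_zero]
        · simp [t, hn, abs_div, abs_of_pos (Real.rpow_pos_of_pos hMpos _),
            abs_of_nonneg (Real.rpow_nonneg (abs_nonneg (v n)) (q - 1))]
      rw [habs, Real.div_rpow (by positivity) hMp.le, ← Real.rpow_mul (abs_nonneg _),
        hpq.symm.sub_one_mul_conj, ← Real.rpow_mul hM, one_div_mul_cancel hpq.ne_zero,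
        Real.rpow_one]
    rw [sum_congr rfl fun n _ => this n, ← sum_div, div_self hMpos.ne']
  have htv : ∑ n ∈ s, t n * v n = M ^ (1 / q) := by
    have (n : ι) : t n * v n = |v n| ^ q / M ^ (1 / p) := by
      have hpow : |v n| ^ (q - 1) * |v n| = |v n| ^ q := by
        rcases eq_or_ne (v n) 0 with hn | hn
        · simp [hn, Real.zero_rpow hpq.symm.ne_zero]
        · rw [← Real.rpow_add_one (abs_ne_zero.mpr hn), sub_add_cancel]
      calc t n * v n = |v n| ^ (q - 1) * (SignType.sign (v n) * v n) / M ^ (1 / p) := by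
            simp only [t]; ring
        _ = |v n| ^ q / M ^ (1 / p) := by rw [sign_mul_self, hpow]
    have hq : 1 - 1 / p = 1 / q := by rw [one_div, one_div, hpq.one_sub_inv]
    rw [sum_congr rfl fun n _ => this n, ← sum_div,
      ← Real.rpow_one_sub' hM (hq ▸ one_div_ne_zero hpq.symm.ne_zero), hq]
  simpa [htv, abs_of_nonneg (Real.rpow_nonneg hM _)] using h t ht.le

lemma summable_div_sqrt_of_le_sub {u A : ℕ → ℝ} (hA : ∀ n, 0 < A n) (hu : ∀ n, 0 ≤ u n)
    (huA : ∀ n, u n ≤ A n - A (n + 1)) : Summable fun n => u n / √(A n) := by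
  have hterm (n : ℕ) : u n / √(A n) ≤ 2 * (√(A n) - √(A (n + 1))) := by
    have hsq : √(A (n + 1)) ≤ √(A n) := Real.sqrt_le_sqrt (by linarith [hu n, huA n])
    rw [div_le_iff₀ (Real.sqrt_pos.mpr (hA n))]
    nlinarith [huA n, Real.sq_sqrt (hA n).le, Real.sq_sqrt (hA (n + 1)).le,
      Real.sqrt_nonneg (A (n + 1))]
  refine summable_of_sum_range_le (c := 2 * √(A 0))
    (fun n => div_nonneg (hu n) (Real.sqrt_nonneg _)) fun N => ?_
  calc ∑ n ∈ range N, u n / √(A n) ≤ ∑ n ∈ range N, 2 * (√(A n) - √(A (n + 1))) :=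
        sum_le_sum fun n _ => hterm n
    _ = 2 * (√(A 0) - √(A N)) := by rw [← mul_sum, sum_range_sub' (fun n => √(A n))]
    _ ≤ 2 * √(A 0) := by linarith [Real.sqrt_nonneg (A N)]

/-- The weights are `ρ n = (A n) ^ (-1/2)`, where `A n` is the `n`-th tail of `u` plus `2⁻¹ ^ n`. -/
lemma exists_monotone_tendsto_atTop_summable_mul {u : ℕ → ℝ} (hu0 : ∀ n, 0 ≤ u n)
    (hu : Summable u) :
    ∃ ρ : ℕ → ℝ, (∀ n, 0 < ρ n) ∧ Monotone ρ ∧ Tendsto ρ atTop atTop ∧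
      Summable fun n => ρ n * u n := by
  set A : ℕ → ℝ := fun n => ∑' k, u (k + n) + 2⁻¹ ^ n
  have hA (n : ℕ) : 0 < A n := by
    have : 0 ≤ ∑' k, u (k + n) := tsum_nonneg fun k => hu0 (k + n)
    positivity
  have hAsucc (n : ℕ) : A n = u n + 2⁻¹ ^ (n + 1) + A (n + 1) := by
    have hshift : ∑' k, u (k + 1 + n) = ∑' k, u (k + (n + 1)) :=
      tsum_congr fun k => by rw [add_assoc, add_comm 1 n]
    simp only [A]
    rw [((summable_nat_add_iff n).mpr hu).tsum_eq_zero_add, hshift, zero_add, pow_succ]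
    ring
  have hAanti : Antitone A := antitone_nat_of_succ_le fun n => by
    have := hu0 n; rw [hAsucc n]; linarith [pow_pos (by norm_num : (0 : ℝ) < 2⁻¹) (n + 1)]
  have hAlim : Tendsto A atTop (𝓝 0) := by
    simpa only [add_zero] using (tendsto_sum_nat_add u).add
      (tendsto_pow_atTop_nhds_zero_of_lt_one (by norm_num : (0 : ℝ) ≤ 2⁻¹) (by norm_num))
  refine ⟨fun n => (√(A n))⁻¹, fun n => inv_pos.mpr (Real.sqrt_pos.mpr (hA n)),
    fun m n hmn => inv_anti₀ (Real.sqrt_pos.mpr (hA n)) (Real.sqrt_le_sqrt (hAanti hmn)),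
    ?_, ?_⟩
  · exact tendsto_inv_nhdsGT_zero.comp (tendsto_nhdsWithin_iff.mpr
      ⟨(Real.continuous_sqrt.tendsto' 0 0 Real.sqrt_zero).comp hAlim,
        Eventually.of_forall fun n => Real.sqrt_pos.mpr (hA n)⟩)
  · refine (summable_div_sqrt_of_le_sub hA hu0 fun n => ?_).congr fun n => ?_
    · have := pow_pos (by norm_num : (0 : ℝ) < 2⁻¹) (n + 1)
      linarith [hAsucc n]
    · rw [div_eq_inv_mul]

lemma exists_monotone_tendsto_atTop_summable_mul_rpow {p : ℝ} (hp : 0 < p) {w : ℕ → ℝ}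
    (hw0 : ∀ n, 0 ≤ w n) (hw : Summable fun n => w n ^ p) :
    ∃ μ : ℕ → ℝ, (∀ n, 0 < μ n) ∧ Monotone μ ∧ Tendsto μ atTop atTop ∧
      Summable fun n => (μ n * w n) ^ p := by
  obtain ⟨ρ, hρ0, hρ, hρtop, hρw⟩ :=
    exists_monotone_tendsto_atTop_summable_mul (fun n => Real.rpow_nonneg (hw0 n) p) hw
  refine ⟨fun n => ρ n ^ (1 / p), fun n => Real.rpow_pos_of_pos (hρ0 n) _,
    fun m n hmn => Real.rpow_le_rpow (hρ0 m).le (hρ hmn) (one_div_pos.mpr hp).le,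
    (tendsto_rpow_atTop (by positivity)).comp hρtop, hρw.congr fun n => ?_⟩
  rw [Real.mul_rpow (Real.rpow_nonneg (hρ0 n).le _) (hw0 n), one_div,
    Real.rpow_inv_rpow (hρ0 n).le hp.ne']

lemma Metric.totallyBounded_of_forall_exists_dist_lt {α : Type*} [PseudoMetricSpace α]
    {S : Set α} (h : ∀ δ > 0, ∃ H : Set α, TotallyBounded H ∧ ∀ x ∈ S, ∃ y ∈ H, dist x y < δ) :
    TotallyBounded S := by
  refine Metric.totallyBounded_iff.mpr fun δ hδ => ?_
  obtain ⟨H, hH, hSH⟩ := h (δ / 2) (half_pos hδ)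
  obtain ⟨F, hF, hHF⟩ := Metric.totallyBounded_iff.mp hH (δ / 2) (half_pos hδ)
  refine ⟨F, hF, fun x hx => ?_⟩
  obtain ⟨y, hy, hxy⟩ := hSH x hx
  obtain ⟨z, hz, hyz⟩ := Set.mem_iUnion₂.mp (hHF hy)
  refine Set.mem_iUnion₂.mpr ⟨z, hz, ?_⟩
  rw [Metric.mem_ball] at hyz ⊢
  linarith [dist_triangle x y z]

section WeakLq

variable {X : Type*} [NormedAddCommGroup X] [NormedSpace ℝ X]

def WeakLqNormLE (q : ℝ) (x : ℕ → X) (W : ℝ) : Prop :=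
  ∀ f : StrongDual ℝ X, ‖f‖ ≤ 1 → ∀ s : Finset ℕ, (∑ n ∈ s, |f (x n)| ^ q) ^ (1 / q) ≤ W

def lpUnitBallImage (p : ℝ) (x : ℕ → X) : Set X :=
  {y | ∃ (s : Finset ℕ) (t : ℕ → ℝ), ∑ n ∈ s, |t n| ^ p ≤ 1 ∧ y = ∑ n ∈ s, t n • x n}

variable {p q W : ℝ} {x : ℕ → X}

lemma WeakLqNormLE.of_lqBound {D : ℝ} (hq : 0 < q)
    (h : ∀ f : StrongDual ℝ X, ‖f‖ ≤ 1 → lqBound (ENNReal.ofReal q) (fun n => f (x n)) D) :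
    WeakLqNormLE q x (D ^ (1 / q)) := by
  intro f hf s
  rcases h f hf with ⟨htop, -⟩ | ⟨-, hs⟩
  · exact absurd htop ENNReal.ofReal_ne_top
  · rw [ENNReal.toReal_ofReal hq.le] at hs
    exact Real.rpow_le_rpow (sum_nonneg fun n _ => by positivity) (hs s) (by positivity)

lemma WeakLqNormLE.nonneg (hq : q ≠ 0) (hx : WeakLqNormLE q x W) : 0 ≤ W := by
  simpa [Real.zero_rpow (inv_ne_zero hq)] using hx 0 (by simp) ∅

lemma WeakLqNormLE.rpow_sum_abs_rpow_le (hq : 0 < q) (hx : WeakLqNormLE q x W)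
    (f : StrongDual ℝ X) (s : Finset ℕ) :
    (∑ n ∈ s, |f (x n)| ^ q) ^ (1 / q) ≤ ‖f‖ * W := by
  rcases eq_or_ne f 0 with rfl | hf
  · simp [Real.zero_rpow hq.ne', Real.zero_rpow (inv_ne_zero hq.ne')]
  have hfpos : 0 < ‖f‖ := norm_pos_iff.mpr hf
  set g := ‖f‖⁻¹ • f
  have hg : ‖g‖ ≤ 1 := by rw [norm_smul, norm_inv, norm_norm, inv_mul_cancel₀ hfpos.ne']
  calc (∑ n ∈ s, |f (x n)| ^ q) ^ (1 / q) = (∑ n ∈ s, |‖f‖ * g (x n)| ^ q) ^ (1 / q) := by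
        simp only [g, smul_apply, smul_eq_mul, ← mul_assoc,
          mul_inv_cancel₀ hfpos.ne', one_mul]
    _ = ‖f‖ * (∑ n ∈ s, |g (x n)| ^ q) ^ (1 / q) := by
        rw [sum_abs_const_mul_rpow_rpow_one_div s _ _ hq, abs_norm]
    _ ≤ ‖f‖ * W := mul_le_mul_of_nonneg_left (hx g hg s) hfpos.le

lemma WeakLqNormLE.norm_sum_smul_le (hpq : p.HolderConjugate q) (hx : WeakLqNormLE q x W)
    (s : Finset ℕ) (t : ℕ → ℝ) :
    ‖∑ n ∈ s, t n • x n‖ ≤ (∑ n ∈ s, |t n| ^ p) ^ (1 / p) * W := by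
  refine norm_le_dual_bound ℝ _ (mul_nonneg (by positivity) (hx.nonneg hpq.symm.ne_zero))
    fun f => ?_
  simp only [map_sum, map_smul, smul_eq_mul, Real.norm_eq_abs]
  calc |∑ n ∈ s, t n * f (x n)| ≤ ∑ n ∈ s, |t n| * |f (x n)| :=
        (abs_sum_le_sum_abs _ _).trans_eq (by simp only [abs_mul])
    _ ≤ (∑ n ∈ s, |t n| ^ p) ^ (1 / p) * (∑ n ∈ s, |f (x n)| ^ q) ^ (1 / q) := by
        simpa only [abs_abs] using
          Real.inner_le_Lp_mul_Lq s (fun n => |t n|) (fun n => |f (x n)|) hpq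
    _ ≤ (∑ n ∈ s, |t n| ^ p) ^ (1 / p) * (‖f‖ * W) := by
        gcongr
        exact hx.rpow_sum_abs_rpow_le hpq.symm.pos f s
    _ = (∑ n ∈ s, |t n| ^ p) ^ (1 / p) * W * ‖f‖ := by ring

lemma WeakLqNormLE.summable_smul [CompleteSpace X] (hpq : p.HolderConjugate q)
    (hx : WeakLqNormLE q x W) {t : ℕ → ℝ} (ht : Summable fun n => |t n| ^ p) :
    Summable fun n => t n • x n := by
  have hW := hx.nonneg hpq.symm.ne_zero
  refine summable_iff_vanishing_norm.mpr fun ε hε => ?_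
  obtain ⟨s, hs⟩ := summable_iff_vanishing_norm.mp ht ((ε / (W + 1)) ^ p) (by positivity)
  refine ⟨s, fun s' hs' => ?_⟩
  have hsmall : (∑ n ∈ s', |t n| ^ p) ^ (1 / p) < ε / (W + 1) := by
    have hnonneg : 0 ≤ ∑ n ∈ s', |t n| ^ p := sum_nonneg fun n _ => by positivity
    have := hs s' hs'
    rw [Real.norm_eq_abs, abs_of_nonneg hnonneg] at this
    calc (∑ n ∈ s', |t n| ^ p) ^ (1 / p) < ((ε / (W + 1)) ^ p) ^ (1 / p) :=
          Real.rpow_lt_rpow hnonneg this (by simpa using hpq.pos)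
      _ = ε / (W + 1) := by rw [one_div, Real.rpow_rpow_inv (by positivity) hpq.ne_zero]
  calc ‖∑ n ∈ s', t n • x n‖ ≤ (∑ n ∈ s', |t n| ^ p) ^ (1 / p) * W := hx.norm_sum_smul_le hpq s' t
    _ ≤ ε / (W + 1) * W := by gcongr
    _ < ε := by
        rw [div_mul_eq_mul_div, div_lt_iff₀ (by positivity)]
        nlinarith

lemma weakLqNormLE_of_forall_mem_lpUnitBallImage (hpq : p.HolderConjugate q) {ε : ℝ}
    (h : ∀ y ∈ lpUnitBallImage p x, ‖y‖ ≤ ε) : WeakLqNormLE q x ε := by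
  intro f hf s
  refine rpow_sum_abs_rpow_le_of_forall_abs_sum_mul_le hpq s _ fun t ht => ?_
  calc |∑ n ∈ s, t n * f (x n)| = ‖f (∑ n ∈ s, t n • x n)‖ := by
        simp [map_sum, Real.norm_eq_abs]
    _ ≤ ‖f‖ * ‖∑ n ∈ s, t n • x n‖ := f.le_opNorm _
    _ ≤ 1 * ε := mul_le_mul hf (h _ ⟨s, t, ht, rfl⟩) (norm_nonneg _) zero_le_one
    _ = ε := one_mul ε

lemma PSummingLE.rpow_sum_norm_rpow_le {Z : Type*} [NormedAddCommGroup Z] [NormedSpace ℝ Z]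
    {U : X →L[ℝ] Z} {C : ℝ} (hU : PSummingLE q U C) (hC : 0 ≤ C) (hx : WeakLqNormLE q x W)
    (s : Finset ℕ) : (∑ n ∈ s, ‖U (x n)‖ ^ q) ^ (1 / q) ≤ C * W := by
  have hsum (F : ℕ → ℝ) : ∑ i, F (s.equivFin.symm i) = ∑ n ∈ s, F n := by
    rw [← sum_coe_sort s F]
    exact s.equivFin.symm.sum_comp fun n : s => F n
  have hweak : weakLpNorm q (fun i => x (s.equivFin.symm i)) ≤ W := by
    refine csSup_le ⟨_, 0, by simp, rfl⟩ ?_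
    rintro r ⟨f, hf, rfl⟩
    rw [hsum fun n => |f (x n)| ^ q]
    exact hx f hf s
  rw [← hsum]
  exact (hU s.card _).trans (mul_le_mul_of_nonneg_left hweak hC)

lemma WeakLqNormLE.norm_sum_smul_inv_smul_le (hpq : p.HolderConjugate q)
    (hx : WeakLqNormLE q x W) {μ : ℕ → ℝ} (hμ0 : ∀ n, 0 < μ n) (hμ : Monotone μ) {N : ℕ}
    {s : Finset ℕ} (hs : ∀ n ∈ s, N ≤ n) {t : ℕ → ℝ} (ht : ∑ n ∈ s, |t n| ^ p ≤ 1) :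
    ‖∑ n ∈ s, t n • (μ n)⁻¹ • x n‖ ≤ (μ N)⁻¹ * W := by
  have hμN : 0 < (μ N)⁻¹ := inv_pos.mpr (hμ0 N)
  have hW := hx.nonneg hpq.symm.ne_zero
  have hle : ∑ n ∈ s, |t n * (μ n)⁻¹| ^ p ≤ ∑ n ∈ s, |(μ N)⁻¹ * t n| ^ p := by
    refine sum_le_sum fun n hn => Real.rpow_le_rpow (abs_nonneg _) ?_ hpq.pos.le
    rw [abs_mul, abs_mul, mul_comm, abs_of_pos (inv_pos.mpr (hμ0 n)), abs_of_pos hμN]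
    exact mul_le_mul_of_nonneg_right (inv_anti₀ (hμ0 N) (hμ (hs n hn))) (abs_nonneg _)
  simp_rw [smul_smul]
  calc ‖∑ n ∈ s, (t n * (μ n)⁻¹) • x n‖
      ≤ (∑ n ∈ s, |t n * (μ n)⁻¹| ^ p) ^ (1 / p) * W := hx.norm_sum_smul_le hpq _ _
    _ ≤ (∑ n ∈ s, |(μ N)⁻¹ * t n| ^ p) ^ (1 / p) * W :=
        mul_le_mul_of_nonneg_right (Real.rpow_le_rpow (sum_nonneg fun n _ => by positivity) hle
          hpq.one_div_nonneg) hW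
    _ = (μ N)⁻¹ * (∑ n ∈ s, |t n| ^ p) ^ (1 / p) * W := by
        rw [sum_abs_const_mul_rpow_rpow_one_div _ _ _ hpq.pos, abs_of_pos hμN]
    _ ≤ (μ N)⁻¹ * 1 * W := by
        refine mul_le_mul_of_nonneg_right (mul_le_mul_of_nonneg_left ?_ hμN.le) hW
        exact Real.rpow_le_one (sum_nonneg fun n _ => by positivity) ht hpq.one_div_nonneg
    _ = (μ N)⁻¹ * W := by rw [mul_one]

/-- The first `N` coordinates range over a compact cube, and the tail contributes at most
`W / μ N`. -/
lemma WeakLqNormLE.totallyBounded_lpUnitBallImage (hpq : p.HolderConjugate q)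
    (hx : WeakLqNormLE q x W) {μ : ℕ → ℝ} (hμ0 : ∀ n, 0 < μ n) (hμ : Monotone μ)
    (hμtop : Tendsto μ atTop atTop) :
    TotallyBounded (lpUnitBallImage p fun n => (μ n)⁻¹ • x n) := by
  refine Metric.totallyBounded_of_forall_exists_dist_lt fun δ hδ => ?_
  obtain ⟨N, hN⟩ := (hμtop.eventually_gt_atTop (W / δ)).exists
  let Φ : (ℕ → ℝ) → X := fun r => ∑ n ∈ range N, r n • (μ n)⁻¹ • x n
  have hΦ : Continuous Φ :=
    continuous_finsetSum _ fun n _ => (continuous_apply n).smul continuous_const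
  refine ⟨Φ '' Set.univ.pi fun _ => Set.Icc (-1) 1,
    ((isCompact_univ_pi fun _ => isCompact_Icc).image hΦ).totallyBounded, ?_⟩
  rintro _ ⟨s, t, ht, rfl⟩
  refine ⟨∑ n ∈ s ∩ range N, t n • (μ n)⁻¹ • x n,
    ⟨fun n => if n ∈ s then t n else 0, fun n _ => ?_, ?_⟩, ?_⟩
  · dsimp only
    split_ifs with hn
    · refine abs_le.mp (not_lt.mp fun h1 => (Real.one_lt_rpow h1 hpq.pos).not_ge ?_)
      exact (single_le_sum (fun i _ => by positivity) hn).trans ht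
    · simp
  · simp only [Φ, ite_smul, zero_smul, sum_ite_mem, inter_comm]
  rw [dist_eq_norm, ← sum_inter_add_sum_sdiff s (range N), add_sub_cancel_left]
  have htail : ∑ n ∈ s \ range N, |t n| ^ p ≤ 1 :=
    (sum_le_sum_of_subset_of_nonneg sdiff_subset fun n _ _ => by positivity).trans ht
  show ‖∑ n ∈ s \ range N, t n • (μ n)⁻¹ • x n‖ < δ
  refine (hx.norm_sum_smul_inv_smul_le hpq hμ0 hμ (N := N) (fun n hn => ?_) htail).trans_lt ?_
  · simpa using (mem_sdiff.mp hn).2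
  · rw [inv_mul_lt_iff₀ (hμ0 N)]
    rwa [div_lt_iff₀ hδ] at hN

end WeakLq

lemma IsFiniteRank.exists_eq_sum_smul {X : Type*} [NormedAddCommGroup X] [NormedSpace ℝ X]
    {R : X →L[ℝ] X} (hR : IsFiniteRank R) :
    ∃ (m : ℕ) (φ : Fin m → StrongDual ℝ X) (v : Fin m → X), ∀ x, R x = ∑ j, φ j x • v j := by
  have : FiniteDimensional ℝ (LinearMap.range (R : X →ₗ[ℝ] X)) := hR
  let e := Module.finBasis ℝ (LinearMap.range (R : X →ₗ[ℝ] X))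
  let Rc : X →L[ℝ] LinearMap.range (R : X →ₗ[ℝ] X) :=
    R.codRestrict _ fun x => LinearMap.mem_range_self _ x
  refine ⟨_, fun j => LinearMap.toContinuousLinearMap (e.coord j) ∘L Rc, fun j => e j,
    fun x => ?_⟩
  have h := congrArg Subtype.val (e.sum_repr (Rc x))
  rw [Submodule.coe_sum] at h
  exact (h.symm : R x = _).trans (by simp [Module.Basis.coord_apply])

section TraceDuality

variable {X Y : Type*} [NormedAddCommGroup X] [NormedSpace ℝ X] [NormedAddCommGroup Y]
  [NormedSpace ℝ Y] {p q W : ℝ} {a : ℕ → StrongDual ℝ Y} {b : ℕ → X}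

lemma summable_smul_and_tsum_smul_eq_zero [CompleteSpace X] (hpq : p.HolderConjugate q)
    (ha : Summable fun n => ‖a n‖ ^ p) (hb : WeakLqNormLE q b W)
    (hz : ∀ y, ∑' n, a n y • b n = 0) (f : StrongDual ℝ X) :
    Summable (fun n => f (b n) • a n) ∧ ∑' n, f (b n) • a n = 0 := by
  have hs : Summable fun n => f (b n) • a n := by
    refine Summable.of_norm (summable_and_abs_tsum_le_of_holder hpq (fun n => norm_nonneg _)
      (fun n => abs_nonneg _) ha (hb.rpow_sum_abs_rpow_le hpq.symm.pos f) fun n => ?_).1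
    rw [abs_norm, norm_smul, Real.norm_eq_abs, mul_comm]
  refine ⟨hs, ContinuousLinearMap.ext fun y => ?_⟩
  have hy : Summable fun n => a n y • b n := by
    refine hb.summable_smul hpq ((ha.mul_right (‖y‖ ^ p)).of_nonneg_of_le
      (fun n => by positivity) fun n => ?_)
    rw [← Real.mul_rpow (norm_nonneg _) (norm_nonneg _)]
    exact Real.rpow_le_rpow (abs_nonneg _) ((a n).le_opNorm y) hpq.pos.le
  calc (∑' n, f (b n) • a n) y = ∑' n, f (a n y • b n) := by
        rw [← ContinuousLinearMap.apply_apply y, (ContinuousLinearMap.apply ℝ ℝ y).map_tsum hs]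
        simp [mul_comm]
    _ = 0 := by rw [← f.map_tsum hy, hz, map_zero]

lemma summable_and_tsum_apply_finiteRank_eq_zero [CompleteSpace X] (hpq : p.HolderConjugate q)
    (ha : Summable fun n => ‖a n‖ ^ p) (hb : WeakLqNormLE q b W)
    (hz : ∀ y, ∑' n, a n y • b n = 0) (U : X →L[ℝ] StrongDual ℝ (StrongDual ℝ Y))
    {R : X →L[ℝ] X} (hR : IsFiniteRank R) :
    Summable (fun n => U (R (b n)) (a n)) ∧ ∑' n, U (R (b n)) (a n) = 0 := by
  obtain ⟨m, φ, v, hRφ⟩ := hR.exists_eq_sum_smul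
  have hterm (n : ℕ) : U (R (b n)) (a n) = ∑ j, U (v j) (φ j (b n) • a n) := by
    simp [hRφ]
  have hj (j : Fin m) := summable_smul_and_tsum_smul_eq_zero hpq ha hb hz (φ j)
  simp_rw [hterm]
  refine ⟨summable_sum fun j _ => (hj j).1.mapL (U (v j)), ?_⟩
  rw [Summable.tsum_finsetSum fun j _ => (hj j).1.mapL (U (v j))]
  exact sum_eq_zero fun j _ => by rw [← (U (v j)).map_tsum (hj j).1, (hj j).2, map_zero]

lemma abs_tsum_apply_sub_apply_le (hpq : p.HolderConjugate q) {μ : ℕ → ℝ}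
    (hμ0 : ∀ n, 0 < μ n) (hμa : Summable fun n => (μ n * ‖a n‖) ^ p)
    {U : X →L[ℝ] StrongDual ℝ (StrongDual ℝ Y)} {C : ℝ} (hC : 0 ≤ C)
    (hU : PSummingLE (X := StrongDual ℝ (StrongDual ℝ Y)) q U C)
    {R : X →L[ℝ] X} {ε : ℝ} (hR : ∀ y ∈ lpUnitBallImage p fun n => (μ n)⁻¹ • b n, ‖R y - y‖ ≤ ε) :
    |∑' n, (U (b n) (a n) - U (R (b n)) (a n))| ≤
      (∑' n, (μ n * ‖a n‖) ^ p) ^ (1 / p) * (C * ε) := by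
  set c : ℕ → X := fun n => (μ n)⁻¹ • b n
  have hd : WeakLqNormLE q (fun n => c n - R (c n)) ε := by
    refine weakLqNormLE_of_forall_mem_lpUnitBallImage hpq ?_
    rintro _ ⟨s, t, ht, rfl⟩
    have := hR _ ⟨s, t, ht, rfl⟩
    rw [norm_sub_rev, map_sum, ← sum_sub_distrib] at this
    simpa only [smul_sub, map_smul] using this
  refine (summable_and_abs_tsum_le_of_holder (u := fun n => μ n * ‖a n‖)
    (v := fun n => ‖U (c n - R (c n))‖) hpq (fun n => mul_nonneg (hμ0 n).le (norm_nonneg _))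
    (fun n => norm_nonneg (U (c n - R (c n)))) hμa (hU.rpow_sum_norm_rpow_le hC hd)
    fun n => ?_).2
  have hbc : b n = μ n • c n := by simp [c, smul_smul, (hμ0 n).ne']
  calc |U (b n) (a n) - U (R (b n)) (a n)| = μ n * |U (c n - R (c n)) (a n)| := by
        have : U (b n) (a n) - U (R (b n)) (a n) = μ n * U (c n - R (c n)) (a n) := by
          simp only [hbc, map_smul, map_sub, sub_apply, smul_apply, smul_eq_mul, mul_sub]
        rw [this, abs_mul, abs_of_pos (hμ0 n)]
    _ ≤ μ n * (‖U (c n - R (c n))‖ * ‖a n‖) :=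
        mul_le_mul_of_nonneg_left ((U (c n - R (c n))).le_opNorm (a n)) (hμ0 n).le
    _ = μ n * ‖a n‖ * ‖U (c n - R (c n))‖ := by ring

theorem tsum_apply_eq_zero_of_hasAP [CompleteSpace X] (hX : HasAP X) (hpq : p.HolderConjugate q)
    (ha : Summable fun n => ‖a n‖ ^ p) (hb : WeakLqNormLE q b W)
    (hz : ∀ y, ∑' n, a n y • b n = 0) {U : X →L[ℝ] StrongDual ℝ (StrongDual ℝ Y)} {C : ℝ}
    (hC : 0 ≤ C) (hU : PSummingLE (X := StrongDual ℝ (StrongDual ℝ Y)) q U C) :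
    ∑' n, U (b n) (a n) = 0 := by
  obtain ⟨μ, hμ0, hμ, hμtop, hμa⟩ :=
    exists_monotone_tendsto_atTop_summable_mul_rpow hpq.pos (fun n => norm_nonneg (a n)) ha
  have hK : IsCompact (closure (lpUnitBallImage p fun n => (μ n)⁻¹ • b n)) :=
    (hb.totallyBounded_lpUnitBallImage hpq hμ0 hμ hμtop).closure.isCompact_of_isClosed
      isClosed_closure
  have htrace : Summable fun n => U (b n) (a n) :=
    (summable_and_abs_tsum_le_of_holder (u := fun n => ‖a n‖) (v := fun n => ‖U (b n)‖) hpq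
      (fun n => norm_nonneg (a n)) (fun n => norm_nonneg (U (b n))) ha
      (hU.rpow_sum_norm_rpow_le hC hb) fun n => ((U (b n)).le_opNorm (a n)).trans_eq
        (mul_comm _ _)).1
  set M := (∑' n, (μ n * ‖a n‖) ^ p) ^ (1 / p)
  have hsmall (ε : ℝ) (hε : ε ∈ Set.Ioi 0) : |∑' n, U (b n) (a n)| ≤ M * (C * ε) := by
    obtain ⟨R, hR, hRK⟩ := hX _ hK ε hε
    obtain ⟨hRs, hR0⟩ := summable_and_tsum_apply_finiteRank_eq_zero hpq ha hb hz U hR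
    rw [← sub_zero (∑' n, U (b n) (a n)), ← hR0, ← htrace.tsum_sub hRs]
    exact abs_tsum_apply_sub_apply_le hpq hμ0 hμa hC hU fun y hy => hRK y (subset_closure hy)
  have hlim : Tendsto (fun ε => M * (C * ε)) (𝓝[>] 0) (𝓝 0) :=
    (Continuous.tendsto' (by fun_prop) 0 0 (by simp)).mono_left nhdsWithin_le_nhds
  exact abs_nonpos_iff.mp (ge_of_tendsto hlim (eventually_nhdsWithin_of_forall hsmall))

end TraceDuality

/-- Corollary 2.5.  If `X` has the approximation property, then for every
`1 < p < ∞` and every Banach space `Y` the canonical map `Y*⊗̂_p X → N_p(Y,X)` is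
injective. -/
theorem statement13
    (X : Type*) [NormedAddCommGroup X] [NormedSpace ℝ X] [CompleteSpace X]
    (hX : HasAP X) :
    ∀ p : ℝ, 1 < p →
      ∀ (Y : Type u) [NormedAddCommGroup Y] [NormedSpace ℝ Y] [CompleteSpace Y],
        ∀ z : TensorRep p (ENNReal.ofReal (p / (p - 1))) Y X,
          (∀ y : Y, z.app y = 0) → z.IsZeroElem (p / (p - 1)) := by
  intro p hp Y _ _ _ z hz U ⟨C, hC0, hC⟩
  have hpq : p.HolderConjugate (p / (p - 1)) := .conjExponent hp
  obtain ⟨D, hD⟩ := z.weak_b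
  exact tsum_apply_eq_zero_of_hasAP hX hpq z.summable_a (.of_lqBound hpq.symm.pos hD) hz hC0 hC
end
end
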